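/- (Derivative of the squared gauge along a disto-line.) Let ℓ ≥ 1, let (c,d) ∈ ℝ² with c ≠ 0, let ϱ ∈ ℝ, and let (t,s) ∈ ℝ². Along the disto-line t(τ) = t + ϱτ, s(τ) = s + (d/f_ℓ(c))(f_ℓ(t(τ)) − f_ℓ(t)), the function ψ(τ) := |t(τ)|^{2ℓ} + s(τ)² is differentiable on ℝ, with ψ′(τ) = (2ϱ/f_ℓ(c)) · ℓ|t(τ)|^{ℓ−1} · ⟨(c,d)|(t(τ),s(τ))⟩_ℓ for every τ ∈ ℝ. -/

import Mathlib

open MeasureTheory Real Set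

noncomputable section

/-- `f_ℓ(σ) = σ|σ|^{ℓ-1}`. -/
def fl (l : ℝ) (σ : ℝ) : ℝ := σ * |σ| ^ (l - 1)

/-- The disto-scalar product `⟨v|w⟩_ℓ`. -/
def distoDot (l : ℝ) (v w : ℝ × ℝ) : ℝ := fl l v.1 * fl l w.1 + v.2 * w.2

/-- The distorted determinant `Δ_ℓ(v;w)`. -/
def distoDet (l : ℝ) (v w : ℝ × ℝ) : ℝ := fl l v.1 * w.2 - v.2 * fl l w.1

/-- The quasihomogeneous gauge `ρ(t,s)`. -/
def qgauge (l : ℝ) (p : ℝ × ℝ) : ℝ := (|p.1| ^ (2 * l) + p.2 ^ 2) ^ (1 / (2 * l))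

/-- First coordinate of the disto-line through `(t,s)` parallel to `(c,d)` with speed `ϱ`. -/
def lineT (ϱ t : ℝ) (τ : ℝ) : ℝ := t + ϱ * τ

/-- Second coordinate of the disto-line through `(t,s)` parallel to `(c,d)` with speed `ϱ`. -/
def lineS (l c d ϱ t s : ℝ) (τ : ℝ) : ℝ := s + d / fl l c * (fl l (t + ϱ * τ) - fl l t)

/- The chain rule gives `ψ' = 2 f_ℓ(t(τ)) (f_ℓ ∘ t)' + 2 s(τ) s'`, once `|t|^{2ℓ}` is written as
`f_ℓ(t)²`. Both derivatives are multiples of `ℓ|t(τ)|^{ℓ-1} ϱ`, since `s` is an affine function of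
`f_ℓ ∘ t`, and `f_ℓ' = ℓ|σ|^{ℓ-1}`; factoring it out leaves `⟨(c,d)|(t(τ),s(τ))⟩_ℓ / f_ℓ(c)`. -/

open Filter Topology

section

variable {l : ℝ}

lemma fl_ne_zero {c : ℝ} (hc : c ≠ 0) : fl l c ≠ 0 :=
  mul_ne_zero hc (rpow_pos_of_pos (abs_pos.mpr hc) _).ne'

lemma fl_one : fl 1 = id := by
  funext y
  simp [fl]

lemma fl_neg (y : ℝ) : fl l (-y) = -fl l y := by
  simp [fl]

lemma fl_of_pos {y : ℝ} (hy : 0 < y) : fl l y = y ^ l := by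
  rw [fl, abs_of_pos hy]
  conv_rhs => rw [← add_sub_cancel 1 l, rpow_add hy, rpow_one]

lemma abs_fl (hl : l ≠ 0) (y : ℝ) : |fl l y| = |y| ^ l := by
  rw [fl, abs_mul, abs_of_nonneg (rpow_nonneg (abs_nonneg y) _),
    ← rpow_one_add' (abs_nonneg y) (by simpa using hl), add_sub_cancel]

lemma fl_sq (hl : l ≠ 0) (y : ℝ) : fl l y ^ 2 = |y| ^ (2 * l) := by
  rw [← sq_abs, abs_fl hl, ← rpow_mul_natCast (abs_nonneg y), mul_comm]
  norm_num

lemma hasDerivAt_fl_of_pos {x : ℝ} (hx : 0 < x) : HasDerivAt (fl l) (l * |x| ^ (l - 1)) x := by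
  rw [abs_of_pos hx]
  refine (hasDerivAt_rpow_const (Or.inl hx.ne')).congr_of_eventuallyEq ?_
  filter_upwards [eventually_gt_nhds hx] with y hy
  exact fl_of_pos hy

lemma hasDerivAt_fl_of_neg {x : ℝ} (hx : x < 0) : HasDerivAt (fl l) (l * |x| ^ (l - 1)) x := by
  have h := ((hasDerivAt_fl_of_pos (l := l) (neg_pos.mpr hx)).comp x (hasDerivAt_neg x)).neg
  rw [abs_neg, mul_neg_one, neg_neg] at h
  have hfun : (-fl l ∘ Neg.neg) = fl l := by
    funext y
    simp [fl_neg]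
  rwa [hfun] at h

lemma hasDerivAt_fl_zero (hl : 1 < l) : HasDerivAt (fl l) 0 0 := by
  have hcont : Tendsto (fun y : ℝ => |y| ^ (l - 1)) (𝓝 0) (𝓝 0) := by
    have := ((continuous_rpow_const (by linarith : 0 ≤ l - 1)).comp continuous_abs).tendsto 0
    simpa [Function.comp_def, zero_rpow (by linarith : l - 1 ≠ 0)] using this
  rw [hasDerivAt_iff_tendsto_slope]
  -- the slope of `f_ℓ` at `0` is `f_ℓ(y) / y = |y|^{ℓ-1}`
  refine (hcont.mono_left nhdsWithin_le_nhds).congr' ?_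
  filter_upwards [self_mem_nhdsWithin] with y (hy : y ≠ 0)
  rw [slope_def_field, fl, fl]
  field_simp
  simp

lemma hasDerivAt_fl (hl : 1 ≤ l) (x : ℝ) : HasDerivAt (fl l) (l * |x| ^ (l - 1)) x := by
  rcases hl.eq_or_lt with rfl | hl
  · simpa [fl_one] using hasDerivAt_id x
  rcases lt_trichotomy x 0 with hx | rfl | hx
  · exact hasDerivAt_fl_of_neg hx
  · simpa [zero_rpow (by linarith : l - 1 ≠ 0)] using hasDerivAt_fl_zero hl
  · exact hasDerivAt_fl_of_pos hx

lemma hasDerivAt_lineT (ϱ t τ : ℝ) : HasDerivAt (lineT ϱ t) ϱ τ :=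
  (((hasDerivAt_id τ).const_mul ϱ).const_add t).congr_deriv (mul_one ϱ)

lemma hasDerivAt_fl_lineT (hl : 1 ≤ l) (ϱ t τ : ℝ) :
    HasDerivAt (fun τ' => fl l (lineT ϱ t τ')) (l * |lineT ϱ t τ| ^ (l - 1) * ϱ) τ :=
  (hasDerivAt_fl hl _).comp τ (hasDerivAt_lineT ϱ t τ)

lemma hasDerivAt_lineS (hl : 1 ≤ l) (c d ϱ t s τ : ℝ) :
    HasDerivAt (lineS l c d ϱ t s) (d / fl l c * (l * |lineT ϱ t τ| ^ (l - 1) * ϱ)) τ :=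
  (((hasDerivAt_fl_lineT hl ϱ t τ).sub_const (fl l t)).const_mul (d / fl l c)).const_add s

end

/-- derivative of the squared gauge along a disto-line. -/
theorem hasDerivAt_gauge_sq_along_line (l : ℝ) (hl : 1 ≤ l) (c d : ℝ) (hc : c ≠ 0)
    (ϱ t s : ℝ) (τ : ℝ) :
    HasDerivAt (fun τ' => |lineT ϱ t τ'| ^ (2 * l) + (lineS l c d ϱ t s τ') ^ 2)
      (2 * ϱ / fl l c * (l * |lineT ϱ t τ| ^ (l - 1)) *
        distoDot l (c, d) (lineT ϱ t τ, lineS l c d ϱ t s τ)) τ := by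
  have hψ : (fun τ' => |lineT ϱ t τ'| ^ (2 * l) + lineS l c d ϱ t s τ' ^ 2) =
      fun τ' => fl l (lineT ϱ t τ') ^ 2 + lineS l c d ϱ t s τ' ^ 2 := by
    funext τ'
    rw [fl_sq (by linarith)]
  rw [hψ]
  refine (((hasDerivAt_fl_lineT hl ϱ t τ).pow 2).add
    ((hasDerivAt_lineS hl c d ϱ t s τ).pow 2)).congr_deriv ?_
  have hfc : fl l c ≠ 0 := fl_ne_zero hc
  simp only [distoDot]
  field_simp
  ring

end
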